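/- arXiv:1103.2202 — 4 statements merged into one kernel-verified Lean document; each statement's English description precedes it below -/
import Mathlib

section
/- Suppose every arrow of G lies in a directed cycle. Then P_G is terminal: every lattice point on the boundary of P_G is a vertex of P_G. -/
open Finset

/-- `ρ(e) = e_{i} - e_{j}` for an arrow `e = (i,j)`. -/
def rho {V : Type*} [DecidableEq V] (e : V × V) : V → ℝ :=
  fun k => (if k = e.1 then (1 : ℝ) else 0) - (if k = e.2 then (1 : ℝ) else 0)

/-- The polytope `P_G` associated with the arrow set `A` of a directed graph. -/
def polyG {V : Type*} [DecidableEq V] (A : Finset (V × V)) : Set (V → ℝ) :=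
  convexHull ℝ (rho '' (A : Set (V × V)))

/-- Connectivity of the underlying undirected graph of the directed graph with arrow set `A`. -/
def GConnected {V : Type*} [DecidableEq V] (A : Finset (V × V)) : Prop :=
  (SimpleGraph.fromRel (fun i j => (i, j) ∈ A)).Connected

/-- Cyclic successor on `Fin l`. -/
def succAt {l : ℕ} (h : 0 < l) (j : Fin l) : Fin l :=
  ⟨((j : ℕ) + 1) % l, Nat.mod_lt _ h⟩

/-- The data of a cycle in a directed graph on the vertex set `V`:
a list of at least two distinct vertices, cyclically ordered, together with, for each
edge of the cycle, a choice of direction (`ε j = true` means the arrow points forwards). -/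
structure PreCycle (V : Type*) where
  l : ℕ
  two_le : 2 ≤ l
  v : Fin l → V
  ε : Fin l → Bool
  inj : Function.Injective v

namespace PreCycle

variable {V : Type*}

theorem pos (C : PreCycle V) : 0 < C.l :=
  lt_of_lt_of_le Nat.zero_lt_two C.two_le

/-- The cyclically next index. -/
def nxt (C : PreCycle V) (j : Fin C.l) : Fin C.l := succAt C.pos j

/-- The arrow of the cycle corresponding to its `j`-th edge. -/
def arrow (C : PreCycle V) (j : Fin C.l) : V × V :=
  if C.ε j then (C.v j, C.v (C.nxt j)) else (C.v (C.nxt j), C.v j)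

/-- `C` is a cycle in the directed graph with arrow set `A`. -/
def IsCycleIn [DecidableEq V] (C : PreCycle V) (A : Finset (V × V)) : Prop :=
  (∀ j, C.arrow j ∈ A) ∧ Function.Injective C.arrow

/-- A cycle is homogeneous if it has as many forward arrows as backward arrows. -/
def Homogeneous (C : PreCycle V) : Prop :=
  2 * (Finset.univ.filter fun j => C.ε j = true).card = C.l

/-- A directed cycle: all arrows point in the direction of traversal. -/
def IsDirected (C : PreCycle V) : Prop := ∀ j, C.ε j = true

/-- The defining property of the function `μ_C` attached to a homogeneous cycle `C`
(here recorded as a function of the position along the cycle; since the vertices of the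
cycle are distinct this is the same as a function on the cycle vertices):
it is nonnegative, decreases by `1` along forward arrows, increases by `1` along
backward arrows, and has minimum value `0`. -/
def IsMu (C : PreCycle V) (μ : Fin C.l → ℤ) : Prop :=
  (∀ j, 0 ≤ μ j) ∧ (∀ j, μ (C.nxt j) = if C.ε j then μ j - 1 else μ j + 1) ∧ (∃ j, μ j = 0)

end PreCycle

/-- Every arrow of the directed graph with arrow set `A` lies in a directed cycle. -/
def EveryArrowInDirCycle {V : Type*} [DecidableEq V] (A : Finset (V × V)) : Prop :=
  ∀ e ∈ A, ∃ C : PreCycle V, C.IsCycleIn A ∧ C.IsDirected ∧ ∃ j, C.arrow j = e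

/-- The dimension of a subset of `ℝ^V` (the dimension of its affine hull). -/
noncomputable def pdim {V : Type*} (s : Set (V → ℝ)) : ℕ :=
  Module.finrank ℝ (vectorSpan ℝ s)

/-- `F` is a facet of the polytope `P`: a nonempty exposed face of codimension one. -/
def IsFacetOf {V : Type*} (F P : Set (V → ℝ)) : Prop :=
  IsExposed ℝ P F ∧ F.Nonempty ∧ pdim F + 1 = pdim P

/-- A polytope is simplicial if the vertices of every facet are affinely independent. -/
def Simplicial {V : Type*} (P : Set (V → ℝ)) : Prop :=
  ∀ F : Set (V → ℝ), IsFacetOf F P →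
    AffineIndependent ℝ (fun x : (F.extremePoints ℝ) => (x : V → ℝ))

/-- The lattice `ℤ^V ∩ {x : Σ x_i = 0}`, as a subset of `ℝ^V`. -/
def latticeSet (V : Type*) [Fintype V] : Set (V → ℝ) :=
  {x | (∀ i, ∃ z : ℤ, x i = (z : ℝ)) ∧ ∑ i, x i = 0}

/-- The set of integer points of `ℝ^V`. -/
def intLat (V : Type*) : Set (V → ℝ) :=
  {x | ∀ i, ∃ z : ℤ, x i = (z : ℝ)}

/-- `W` is a `ℤ`-basis of (the additive group generated by) `L`. -/
def IsZBasisOf {V : Type*} (W L : Set (V → ℝ)) : Prop :=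
  W ⊆ L ∧ LinearIndependent ℤ (fun x : W => (x : V → ℝ)) ∧
    L ⊆ (Submodule.span ℤ W : Set (V → ℝ))

/-- There is a directed path of length `n` from `i` to `j` in the directed graph `A`. -/
def HasDPath {V : Type*} (A : Finset (V × V)) (i j : V) (n : ℕ) : Prop :=
  ∃ f : Fin (n + 1) → V, f 0 = i ∧ f (Fin.last n) = j ∧
    ∀ k : Fin n, (f k.castSucc, f k.succ) ∈ A

/-- The underlying undirected graph of `A` contains an even cycle. -/
def HasEvenCycle {V : Type*} [DecidableEq V] (A : Finset (V × V)) : Prop :=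
  ∃ C : PreCycle V, 3 ≤ C.l ∧ Even C.l ∧
    ∀ j, (C.v j, C.v (C.nxt j)) ∈ A ∨ (C.v (C.nxt j), C.v j) ∈ A

section Aux

variable {V : Type*} [DecidableEq V]

/-- Any element of `polyG A` is a convex combination with weights indexed by `A`. -/
lemma exists_weights {A : Finset (V × V)} {x : V → ℝ} (hx : x ∈ polyG A) :
    ∃ lam : V × V → ℝ, (∀ e, 0 ≤ lam e) ∧ (∀ e, e ∉ A → lam e = 0) ∧
      ∑ e ∈ A, lam e = 1 ∧ ∑ e ∈ A, lam e • rho e = x := by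
  rw [polyG, _root_.convexHull_eq] at hx
  obtain ⟨ι, t, w, z, hw0, hw1, hz, hcm⟩ := hx
  have hAne : A.Nonempty := by
    rcases t.eq_empty_or_nonempty with rfl | ⟨k, hk⟩
    · simp at hw1
    · obtain ⟨e, he, -⟩ := hz k hk
      exact ⟨e, he⟩
  obtain ⟨e₀, he₀⟩ := hAne
  have hE : ∀ k : ι, ∃ e : V × V, k ∈ t → e ∈ A ∧ rho e = z k := by
    intro k
    by_cases hk : k ∈ t
    · obtain ⟨e, he, hez⟩ := hz k hk
      exact ⟨e, fun _ => ⟨he, hez⟩⟩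
    · exact ⟨e₀, fun h => absurd h hk⟩
  choose E hEmem using hE
  refine ⟨fun e => ∑ k ∈ t with E k = e, w k, ?_, ?_, ?_, ?_⟩
  · intro e
    exact Finset.sum_nonneg fun k hk => hw0 k (Finset.mem_filter.1 hk).1
  · intro e he
    apply Finset.sum_eq_zero
    intro k hk
    obtain ⟨hkt, hke⟩ := Finset.mem_filter.1 hk
    exact absurd (hke ▸ (hEmem k hkt).1) he
  · rw [Finset.sum_fiberwise_of_maps_to (fun k hk => (hEmem k hk).1)]
    exact hw1
  · have : ∀ e ∈ A, (∑ k ∈ t with E k = e, w k) • rho e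
        = ∑ k ∈ t with E k = e, w k • rho (E k) := by
      intro e _
      rw [Finset.sum_smul]
      exact Finset.sum_congr rfl fun k hk => by rw [(Finset.mem_filter.1 hk).2]
    rw [Finset.sum_congr rfl this,
      Finset.sum_fiberwise_of_maps_to (fun k hk => (hEmem k hk).1)]
    rw [Finset.centerMass_eq_of_sum_1 _ _ hw1] at hcm
    rw [← hcm]
    exact Finset.sum_congr rfl fun k hk => by rw [(hEmem k hk).2]

lemma rho_le_one (e : V × V) (k : V) : rho e k ≤ 1 := by
  unfold rho; split_ifs <;> norm_num

lemma neg_one_le_rho (e : V × V) (k : V) : -1 ≤ rho e k := by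
  unfold rho; split_ifs <;> norm_num

/-- Key support lemma: any representing measure of `rho (i,j)` is concentrated at `(i,j)`. -/
lemma support_lemma {A : Finset (V × V)} {lam : V × V → ℝ} {i j : V} (hij : i ≠ j)
    (h0 : ∀ e, 0 ≤ lam e) (hs : ∑ e ∈ A, lam e = 1)
    (hxr : ∑ e ∈ A, lam e • rho e = rho (i, j)) :
    ∀ e ∈ A, e ≠ (i, j) → lam e = 0 := by
  have hcoord : ∀ k, ∑ e ∈ A, lam e * rho e k = rho (i, j) k := by
    intro k
    have := congrFun hxr k
    simpa [Finset.sum_apply] using this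
  have hi : ∑ e ∈ A, lam e * (1 - rho e i) = 0 := by
    have h1 : rho (i, j) i = 1 := by simp [rho, hij]
    have := hcoord i
    rw [h1] at this
    rw [Finset.sum_congr rfl (fun e _ => by ring_nf : ∀ e ∈ A,
      lam e * (1 - rho e i) = lam e - lam e * rho e i)]
    rw [Finset.sum_sub_distrib, hs, this]
    ring
  have hj : ∑ e ∈ A, lam e * (1 + rho e j) = 0 := by
    have h1 : rho (i, j) j = -1 := by simp [rho, hij.symm]
    have := hcoord j
    rw [h1] at this
    rw [Finset.sum_congr rfl (fun e _ => by ring_nf : ∀ e ∈ A,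
      lam e * (1 + rho e j) = lam e + lam e * rho e j)]
    rw [Finset.sum_add_distrib, hs, this]
    ring
  have hti : ∀ e ∈ A, lam e * (1 - rho e i) = 0 :=
    fun e he => (Finset.sum_eq_zero_iff_of_nonneg (fun e _ =>
      mul_nonneg (h0 e) (by linarith [rho_le_one e i]))).1 hi e he
  have htj : ∀ e ∈ A, lam e * (1 + rho e j) = 0 :=
    fun e he => (Finset.sum_eq_zero_iff_of_nonneg (fun e _ =>
      mul_nonneg (h0 e) (by linarith [neg_one_le_rho e j]))).1 hj e he
  intro e he hne
  by_contra hl0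
  have hlpos : 0 < lam e := lt_of_le_of_ne (h0 e) (Ne.symm hl0)
  have hri : rho e i = 1 := by
    have := hti e he
    rcases mul_eq_zero.1 this with h | h
    · exact absurd h hl0
    · linarith
  have hrj : rho e j = -1 := by
    have := htj e he
    rcases mul_eq_zero.1 this with h | h
    · exact absurd h hl0
    · linarith
  have he1 : e.1 = i ∧ e.2 ≠ i := by
    unfold rho at hri
    constructor
    · by_contra h; rw [if_neg (fun hh : i = e.1 => h hh.symm)] at hri
      split_ifs at hri <;> linarith
    · intro h; rw [← h] at hri; simp at hri; split_ifs at hri <;> linarith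
  have he2 : e.2 = j := by
    unfold rho at hrj
    by_contra h
    rw [if_neg (fun hh : j = e.2 => h hh.symm)] at hrj
    split_ifs at hrj <;> linarith
  exact hne (Prod.ext he1.1 he2)

/-- Collapse a sum over `A` of a function supported only at `(i,j)`. -/
lemma collapse {A : Finset (V × V)} {lam : V × V → ℝ} {i j : V}
    (hz : ∀ e, e ∉ A → lam e = 0) (hsupp : ∀ e ∈ A, e ≠ (i, j) → lam e = 0)
    (hs : ∑ e ∈ A, lam e = 1) :
    ∑ e ∈ A, lam e • rho e = rho (i, j) := by
  have h1 : ∑ e ∈ A, lam e = lam (i, j) :=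
    Finset.sum_eq_single (i, j) (fun e he hne => hsupp e he hne) (fun h => hz _ h)
  have h2 : ∑ e ∈ A, lam e • rho e = lam (i, j) • rho (i, j) :=
    Finset.sum_eq_single (i, j) (fun e he hne => by rw [hsupp e he hne, zero_smul])
      (fun h => by rw [hz _ h, zero_smul])
  rw [h2, show lam (i, j) = 1 from h1 ▸ hs, one_smul]

end Aux

section Aux2

variable {V : Type*} [DecidableEq V] [Fintype V]

lemma sum_rho (e : V × V) : ∑ k, rho e k = 0 := by
  simp [rho, Finset.sum_sub_distrib, Finset.sum_ite_eq']

/-- A nonzero integer point represented by a convex combination of the `rho e`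
must be of the form `rho (i,j)` with `i ≠ j`. -/
lemma classify {A : Finset (V × V)} {x : V → ℝ} {lam : V × V → ℝ}
    (h0 : ∀ e, 0 ≤ lam e) (hs : ∑ e ∈ A, lam e = 1)
    (hrep : ∑ e ∈ A, lam e • rho e = x)
    (hint : ∀ i, ∃ z : ℤ, x i = (z : ℝ)) (hx0 : x ≠ 0) :
    ∃ i j, i ≠ j ∧ x = rho (i, j) := by
  have hcoord : ∀ k, x k = ∑ e ∈ A, lam e * rho e k := by
    intro k
    have := congrFun hrep k
    simpa [Finset.sum_apply] using this.symm
  -- each coordinate lies in [-1, 1]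
  have hub : ∀ k, x k ≤ 1 := by
    intro k
    rw [hcoord k, ← hs]
    exact Finset.sum_le_sum fun e _ => by
      nlinarith [rho_le_one e k, h0 e, neg_one_le_rho e k]
  have hlb : ∀ k, -1 ≤ x k := by
    intro k
    rw [hcoord k]
    have : -(1 : ℝ) = ∑ e ∈ A, lam e * (-1) := by
      rw [← Finset.sum_mul, hs]; ring
    rw [this]
    exact Finset.sum_le_sum fun e _ => by
      nlinarith [neg_one_le_rho e k, h0 e]
  have htri : ∀ k, x k = 1 ∨ x k = 0 ∨ x k = -1 := by
    intro k
    obtain ⟨z, hzk⟩ := hint k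
    have h1 : (z : ℝ) ≤ 1 := hzk ▸ hub k
    have h2 : (-1 : ℝ) ≤ (z : ℝ) := hzk ▸ hlb k
    have hz1 : z ≤ 1 := by exact_mod_cast h1
    have hz2 : -1 ≤ z := by exact_mod_cast h2
    interval_cases z <;> simp [hzk] <;> norm_num
  -- positive part bound
  have hposb : ∑ k, max (x k) 0 ≤ 1 := by
    have key : ∀ k, max (x k) 0 ≤ ∑ e ∈ A, lam e * (if k = e.1 then 1 else 0) := by
      intro k
      refine max_le ?_ ?_
      · rw [hcoord k]
        refine Finset.sum_le_sum fun e _ => mul_le_mul_of_nonneg_left ?_ (h0 e)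
        unfold rho; split_ifs <;> norm_num
      · exact Finset.sum_nonneg fun e _ =>
          mul_nonneg (h0 e) (by split_ifs <;> norm_num)
    calc ∑ k, max (x k) 0 ≤ ∑ k, ∑ e ∈ A, lam e * (if k = e.1 then 1 else 0) :=
          Finset.sum_le_sum fun k _ => key k
      _ = ∑ e ∈ A, ∑ k, lam e * (if k = e.1 then 1 else 0) := Finset.sum_comm
      _ = ∑ e ∈ A, lam e := by
          refine Finset.sum_congr rfl fun e _ => ?_
          rw [← Finset.mul_sum]
          simp [Finset.sum_ite_eq']
      _ = 1 := hs
  have hnegb : ∑ k, max (-x k) 0 ≤ 1 := by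
    have key : ∀ k, max (-x k) 0 ≤ ∑ e ∈ A, lam e * (if k = e.2 then 1 else 0) := by
      intro k
      refine max_le ?_ ?_
      · have : -x k = ∑ e ∈ A, lam e * (-rho e k) := by
          rw [hcoord k, ← Finset.sum_neg_distrib]
          exact Finset.sum_congr rfl fun e _ => by ring
        rw [this]
        refine Finset.sum_le_sum fun e _ => mul_le_mul_of_nonneg_left ?_ (h0 e)
        unfold rho; split_ifs <;> norm_num
      · exact Finset.sum_nonneg fun e _ =>
          mul_nonneg (h0 e) (by split_ifs <;> norm_num)
    calc ∑ k, max (-x k) 0 ≤ ∑ k, ∑ e ∈ A, lam e * (if k = e.2 then 1 else 0) :=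
          Finset.sum_le_sum fun k _ => key k
      _ = ∑ e ∈ A, ∑ k, lam e * (if k = e.2 then 1 else 0) := Finset.sum_comm
      _ = ∑ e ∈ A, lam e := by
          refine Finset.sum_congr rfl fun e _ => ?_
          rw [← Finset.mul_sum]
          simp [Finset.sum_ite_eq']
      _ = 1 := hs
  -- total sum is zero
  have hsum0 : ∑ k, x k = 0 := by
    have : ∑ k, x k = ∑ e ∈ A, ∑ k, lam e * rho e k := by
      rw [← Finset.sum_comm]
      exact Finset.sum_congr rfl fun k _ => hcoord k
    rw [this]
    refine Finset.sum_eq_zero fun e _ => ?_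
    rw [← Finset.mul_sum, sum_rho, mul_zero]
  set Pos := Finset.univ.filter (fun k => x k = 1) with hPos
  set Neg := Finset.univ.filter (fun k => x k = -1) with hNeg
  have hposcard : (Pos.card : ℝ) = ∑ k, max (x k) 0 := by
    rw [Finset.card_filter]
    push_cast
    refine Finset.sum_congr rfl fun k _ => ?_
    rcases htri k with h | h | h <;> simp [h] <;> norm_num
  have hnegcard : (Neg.card : ℝ) = ∑ k, max (-x k) 0 := by
    rw [Finset.card_filter]
    push_cast
    refine Finset.sum_congr rfl fun k _ => ?_
    rcases htri k with h | h | h <;> simp [h] <;> norm_num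
  have hcardeq : (Pos.card : ℝ) = (Neg.card : ℝ) := by
    have : ∑ k, x k = ∑ k, (max (x k) 0 - max (-x k) 0) := by
      refine Finset.sum_congr rfl fun k _ => ?_
      rcases htri k with h | h | h <;> rw [h] <;> norm_num
    rw [hsum0] at this
    rw [Finset.sum_sub_distrib] at this
    rw [hposcard, hnegcard]
    linarith
  have hPne : Pos.Nonempty := by
    by_contra hP
    rw [Finset.not_nonempty_iff_eq_empty] at hP
    have hN0 : (Neg.card : ℝ) = 0 := by rw [← hcardeq, hP]; simp
    apply hx0
    funext k
    rcases htri k with h | h | h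
    · have hm : k ∈ Pos := by rw [hPos]; exact Finset.mem_filter.2 ⟨Finset.mem_univ k, h⟩
      rw [hP] at hm; simp at hm
    · exact h
    · have hNe : Neg = ∅ := Finset.card_eq_zero.1 (by exact_mod_cast hN0)
      have hm : k ∈ Neg := by rw [hNeg]; exact Finset.mem_filter.2 ⟨Finset.mem_univ k, h⟩
      rw [hNe] at hm; simp at hm
  have hP1 : Pos.card = 1 := by
    have h1 : Pos.card ≤ 1 := by exact_mod_cast (hposcard ▸ hposb : (Pos.card : ℝ) ≤ 1)
    have h2 : 1 ≤ Pos.card := Finset.card_pos.2 hPne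
    omega
  have hN1 : Neg.card = 1 := by
    have : (Neg.card : ℝ) = 1 := by rw [← hcardeq, hP1]; norm_num
    exact_mod_cast this
  obtain ⟨i, hi⟩ := Finset.card_eq_one.1 hP1
  obtain ⟨j, hj⟩ := Finset.card_eq_one.1 hN1
  have hxi : x i = 1 := by
    have hm : i ∈ Pos := by rw [hi]; exact Finset.mem_singleton_self i
    rw [hPos] at hm; exact (Finset.mem_filter.1 hm).2
  have hxj : x j = -1 := by
    have hm : j ∈ Neg := by rw [hj]; exact Finset.mem_singleton_self j
    rw [hNeg] at hm; exact (Finset.mem_filter.1 hm).2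
  have hij : i ≠ j := fun h => by rw [h, hxj] at hxi; norm_num at hxi
  refine ⟨i, j, hij, funext fun k => ?_⟩
  rcases htri k with h | h | h
  · have hk : k = i := by
      have hm : k ∈ Pos := by rw [hPos]; exact Finset.mem_filter.2 ⟨Finset.mem_univ k, h⟩
      rw [hi] at hm; exact Finset.mem_singleton.1 hm
    subst hk
    simp [rho, h, hij]
  · have hki : k ≠ i := fun hk => by rw [hk, hxi] at h; norm_num at h
    have hkj : k ≠ j := fun hk => by rw [hk, hxj] at h; norm_num at h
    simp [rho, h, hki, hkj]
  · have hk : k = j := by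
      have hm : k ∈ Neg := by rw [hNeg]; exact Finset.mem_filter.2 ⟨Finset.mem_univ k, h⟩
      rw [hj] at hm; exact Finset.mem_singleton.1 hm
    subst hk
    simp [rho, h, hij.symm]

end Aux2


/-- if every arrow lies in a directed cycle then `P_G` is terminal:
every lattice point of `P_G` is the origin or a vertex. -/
theorem stmt2 {d : ℕ} (A : Finset (Fin d × Fin d)) (hconn : GConnected A)
    (h : EveryArrowInDirCycle A) :
    ∀ x ∈ polyG A, (∀ i, ∃ z : ℤ, x i = (z : ℝ)) →
      x = 0 ∨ x ∈ (polyG A).extremePoints ℝ := by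
  intro x hx hint
  by_cases hx0 : x = 0
  · exact Or.inl hx0
  right
  obtain ⟨lam, h0, hzero, hs, hrep⟩ := exists_weights hx
  obtain ⟨i, j, hij, rfl⟩ := classify h0 hs hrep hint hx0
  rw [mem_extremePoints]
  refine ⟨hx, fun y hy z hz hseg => ?_⟩
  obtain ⟨a, b, ha, hb, hab, habx⟩ := hseg
  obtain ⟨lamY, hY0, hYz, hYs, hYrep⟩ := exists_weights hy
  obtain ⟨lamZ, hZ0, hZz, hZs, hZrep⟩ := exists_weights hz
  have hmu0 : ∀ e, 0 ≤ a * lamY e + b * lamZ e := fun e =>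
    add_nonneg (mul_nonneg ha.le (hY0 e)) (mul_nonneg hb.le (hZ0 e))
  have hmus : ∑ e ∈ A, (a * lamY e + b * lamZ e) = 1 := by
    rw [Finset.sum_add_distrib, ← Finset.mul_sum, ← Finset.mul_sum, hYs, hZs]
    simpa using hab
  have hmurep : ∑ e ∈ A, (a * lamY e + b * lamZ e) • rho e = rho (i, j) := by
    have : ∀ e ∈ A, (a * lamY e + b * lamZ e) • rho e
        = a • (lamY e • rho e) + b • (lamZ e • rho e) := by
      intro e _
      rw [add_smul, smul_smul, smul_smul]
    rw [Finset.sum_congr rfl this, Finset.sum_add_distrib, ← Finset.smul_sum,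
      ← Finset.smul_sum, hYrep, hZrep]
    exact habx
  have hsupp := support_lemma hij hmu0 hmus hmurep
  have hYsupp : ∀ e ∈ A, e ≠ (i, j) → lamY e = 0 := by
    intro e he hne
    have h := hsupp e he hne
    have h1 : a * lamY e = 0 := by
      nlinarith [mul_nonneg ha.le (hY0 e), mul_nonneg hb.le (hZ0 e)]
    exact (mul_eq_zero.1 h1).resolve_left (ne_of_gt ha)
  have hZsupp : ∀ e ∈ A, e ≠ (i, j) → lamZ e = 0 := by
    intro e he hne
    have h := hsupp e he hne
    have h1 : b * lamZ e = 0 := by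
      nlinarith [mul_nonneg ha.le (hY0 e), mul_nonneg hb.le (hZ0 e)]
    exact (mul_eq_zero.1 h1).resolve_left (ne_of_gt hb)
  constructor
  · rw [← hYrep]; exact collapse hYz hYsupp hYs
  · rw [← hZrep]; exact collapse hZz hZsupp hZs
end

section
/- Let C = (e_1,...,e_l) be a cycle in G and F a facet of P_G containing all of ρ(e_1),...,ρ(e_l). Then C is homogeneous, i.e., the number of forward arrows of C equals the number of backward arrows. -/
open Finset

lemma succAt_injective {l : ℕ} (h : 0 < l) : Function.Injective (succAt h) := by
  intro a b hab
  have hab' : ((a : ℕ) + 1) % l = ((b : ℕ) + 1) % l := congrArg Fin.val hab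
  have ha := a.isLt
  have hb := b.isLt
  have h1 : ((a : ℕ) + 1) % l = if (a : ℕ) + 1 = l then 0 else (a : ℕ) + 1 := by
    split
    · rename_i heq; rw [heq, Nat.mod_self]
    · exact Nat.mod_eq_of_lt (by omega)
  have h2 : ((b : ℕ) + 1) % l = if (b : ℕ) + 1 = l then 0 else (b : ℕ) + 1 := by
    split
    · rename_i heq; rw [heq, Nat.mod_self]
    · exact Nat.mod_eq_of_lt (by omega)
  have : (a : ℕ) = (b : ℕ) := by
    rw [h1, h2] at hab'
    split at hab' <;> split at hab' <;> omega
  exact Fin.ext this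

lemma sum_comp_succAt {l : ℕ} (h : 0 < l) (f : Fin l → ℝ) :
    ∑ j, f (succAt h j) = ∑ j, f j :=
  Fintype.sum_bijective (succAt h)
    ((Finite.injective_iff_bijective).1 (succAt_injective h)) _ _ (fun _ => rfl)

lemma telescope {V : Type*} (C : PreCycle V) (g : V → ℝ) :
    ∑ j, (g (C.v j) - g (C.v (C.nxt j))) = 0 := by
  rw [Finset.sum_sub_distrib, sub_eq_zero]
  exact (sum_comp_succAt C.pos fun j => g (C.v j)).symm

/-- a cycle of `G` all of whose points `ρ(e)` lie on a common facet of
`P_G` is homogeneous. -/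
theorem stmt4 {d : ℕ} (A : Finset (Fin d × Fin d)) (hconn : GConnected A)
    (h : EveryArrowInDirCycle A) (C : PreCycle (Fin d)) (hC : C.IsCycleIn A)
    (F : Set (Fin d → ℝ)) (hF : IsFacetOf F (polyG A))
    (hsub : ∀ j, rho (C.arrow j) ∈ F) :
    C.Homogeneous := by
  obtain ⟨hexp, hne, hdim⟩ := hF
  obtain ⟨φ, hφ⟩ := hexp hne
  have hFmem : ∀ x, x ∈ F ↔ x ∈ polyG A ∧ ∀ y ∈ polyG A, φ y ≤ φ x := by
    intro x; rw [hφ]; exact Iff.rfl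
  have hFP : F ⊆ polyG A := fun x hx => ((hFmem x).1 hx).1
  have hrhoP : ∀ e ∈ A, rho e ∈ polyG A := fun e he =>
    subset_convexHull ℝ _ ⟨e, he, rfl⟩
  set g : Fin d → ℝ := fun i => φ (fun k => if k = i then (1:ℝ) else 0) with hg
  have hφrho : ∀ e : Fin d × Fin d, φ (rho e) = g e.1 - g e.2 := by
    intro e
    have he : rho e = (fun k => if k = e.1 then (1:ℝ) else 0)
        - (fun k => if k = e.2 then (1:ℝ) else 0) := rfl
    rw [he, map_sub]
  have j0 : Fin C.l := ⟨0, C.pos⟩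
  set c : ℝ := φ (rho (C.arrow j0)) with hc
  have hmemF : rho (C.arrow j0) ∈ F := hsub j0
  have hval : ∀ j, φ (rho (C.arrow j)) = c := by
    intro j
    have h1 := (hFmem _).1 (hsub j)
    have h2 := (hFmem _).1 hmemF
    exact le_antisymm (h2.2 _ h1.1) (h1.2 _ h2.1)
  -- c ≠ 0
  have hc0 : c ≠ 0 := by
    intro hc0
    have hle : ∀ y ∈ polyG A, φ y ≤ 0 := by
      intro y hy
      have := ((hFmem _).1 hmemF).2 y hy
      rwa [← hc, hc0] at this
    have hallF : ∀ e ∈ A, rho e ∈ F := by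
      intro e he
      obtain ⟨D, hD, hdir, j, hje⟩ := h e he
      have htel : ∑ j', φ (rho (D.arrow j')) = 0 := by
        have heq : ∀ j', φ (rho (D.arrow j')) = g (D.v j') - g (D.v (D.nxt j')) := by
          intro j'
          rw [hφrho]
          simp [PreCycle.arrow, hdir j']
        rw [Finset.sum_congr rfl fun j' _ => heq j']
        exact telescope D g
      have hzero : φ (rho (D.arrow j)) = 0 :=
        (Finset.sum_eq_zero_iff_of_nonpos
          (fun i _ => hle _ (hrhoP _ (hD.1 i)))).1 htel j (Finset.mem_univ _)
      have he0 : φ (rho e) = 0 := by rw [← hje]; exact hzero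
      exact (hFmem _).2 ⟨hrhoP e he, fun y hy => by rw [he0]; exact hle y hy⟩
    have hPF : polyG A ⊆ F := by
      apply convexHull_min ?_ (hexp.convex (convex_convexHull ℝ _))
      rintro x ⟨e, he, rfl⟩
      exact hallF e he
    have hFeq : F = polyG A := Set.Subset.antisymm hFP hPF
    rw [hFeq] at hdim
    omega
  -- telescoping on C
  have hterm : ∀ j, g (C.v j) - g (C.v (C.nxt j)) = if C.ε j then c else -c := by
    intro j
    have hv := hval j
    rw [hφrho] at hv
    by_cases hε : C.ε j
    · simp only [PreCycle.arrow, hε, if_true] at hv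
      simpa [hε] using hv
    · simp only [PreCycle.arrow, hε, if_false, Bool.false_eq_true] at hv
      simp only [hε, Bool.false_eq_true, if_false]
      linarith
  have hsum : ∑ j : Fin C.l, (if C.ε j then c else -c) = 0 := by
    rw [Finset.sum_congr rfl fun j _ => (hterm j).symm]
    exact telescope C g
  rw [Finset.sum_ite, Finset.sum_const, Finset.sum_const] at hsum
  set k := (Finset.univ.filter fun j => C.ε j = true).card with hk
  have hcard : k + (Finset.univ.filter fun j => ¬ (C.ε j = true)).card = C.l := by
    rw [hk]
    rw [Finset.card_filter_add_card_filter_not]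
    simp
  set m := (Finset.univ.filter fun j => ¬ (C.ε j = true)).card with hm
  have hksm : ((k : ℝ) - m) * c = 0 := by
    have : (k : ℝ) * c + (m : ℝ) * (-c) = 0 := by
      simpa [nsmul_eq_mul, hk, hm] using hsum
    ring_nf
    ring_nf at this
    linarith
  have hkm : (k : ℝ) = m := by
    rcases mul_eq_zero.1 hksm with h' | h'
    · linarith
    · exact absurd h' hc0
  have hkmn : k = m := by exact_mod_cast hkm
  show 2 * k = C.l
  omega
end

section
/- Suppose every arrow of G lies in a directed cycle. If P_G is simplicial, then P_G is smooth: for every facet of P_G, its vertices form a ℤ-basis of the lattice ℤ^d ∩ {x : Σx_i = 0}. -/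
open Finset

/-!
The arrows of a directed cycle sum to zero, so the origin lies in `P_G`, and a linear functional
that is `≤ 0` on every arrow vector must vanish on all of them. Hence the functional exposing a
facet `F` is positive on `F`: the affine hull of `F` misses the origin, and simpliciality turns
into linear independence of the vertices of `F`, which are arrow vectors `eᵢ - eⱼ`. As `G` is
connected, `P_G` spans `{x : Σ xᵢ = 0}`, so counting dimensions the vertices of `F` are a real
basis of it.

Integrality comes from total unimodularity: for a linearly independent family of arrow vectors,
contracting one arrow (identifying its endpoints) maps the others to a smaller such family, so by
induction every integer vector in the real span is an integer combination.
-/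

namespace PreCycle

variable {V : Type*}

theorem nxt_injective (C : PreCycle V) : Function.Injective C.nxt := fun j k hjk =>
  Fin.ext <| by
    have h := Nat.ModEq.add_right_cancel' 1 (congrArg Fin.val hjk : ((j : ℕ) + 1) % C.l = _)
    rwa [Nat.ModEq, Nat.mod_eq_of_lt j.2, Nat.mod_eq_of_lt k.2] at h

theorem nxt_bijective (C : PreCycle V) : Function.Bijective C.nxt :=
  Finite.injective_iff_bijective.mp C.nxt_injective

end PreCycle

section Arrows

variable {V : Type*} [DecidableEq V]

theorem rho_eq_single_sub_single (e : V × V) : rho e = Pi.single e.1 1 - Pi.single e.2 1 := by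
  funext k
  simp [rho, Pi.single_apply]

theorem rho_self (a : V) : rho (a, a) = 0 := by
  simp [rho_eq_single_sub_single]

theorem rho_swap (e : V × V) : rho e.swap = -rho e := by
  simp [rho_eq_single_sub_single]

theorem rho_add_rho (a b c : V) : rho (a, b) + rho (b, c) = rho (a, c) := by
  simp [rho_eq_single_sub_single]

theorem rho_mem_intLat (e : V × V) : rho e ∈ intLat V := fun k =>
  ⟨(if k = e.1 then 1 else 0) - (if k = e.2 then 1 else 0), by simp only [rho]; split_ifs <;> simp⟩

theorem sum_rho_arrow_eq_zero {C : PreCycle V} (hC : C.IsDirected) :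
    ∑ j, rho (C.arrow j) = 0 := by
  have harrow : ∀ j, C.arrow j = (C.v j, C.v (C.nxt j)) := fun j => if_pos (hC j)
  simp only [harrow, rho_eq_single_sub_single, Finset.sum_sub_distrib]
  rw [C.nxt_bijective.sum_comp fun j => (Pi.single (C.v j) 1 : V → ℝ), sub_self]

theorem zero_mem_polyG {A : Finset (V × V)} (h : EveryArrowInDirCycle A)
    (hA : A.Nonempty) : (0 : V → ℝ) ∈ polyG A := by
  obtain ⟨e, he⟩ := hA
  obtain ⟨C, hC, hdir, -⟩ := h e he
  have hl : (0 : ℝ) < C.l := Nat.cast_pos.mpr C.pos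
  have hcentroid : ∑ j, (C.l : ℝ)⁻¹ • rho (C.arrow j) = 0 := by
    rw [← Finset.smul_sum, sum_rho_arrow_eq_zero hdir, smul_zero]
  rw [← hcentroid]
  refine (convex_convexHull ℝ _).sum_mem (fun _ _ => inv_nonneg.mpr hl.le) ?_
    (fun j _ => subset_convexHull ℝ _ (Set.mem_image_of_mem rho (hC.1 j)))
  simp [hl.ne']

theorem map_rho_eq_zero_of_nonpos {A : Finset (V × V)} (h : EveryArrowInDirCycle A)
    {M : Type*} [FunLike M (V → ℝ) ℝ] [AddMonoidHomClass M (V → ℝ) ℝ] (l : M)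
    (hl : ∀ e ∈ A, l (rho e) ≤ 0) {e : V × V} (he : e ∈ A) : l (rho e) = 0 := by
  obtain ⟨C, hC, hdir, j, rfl⟩ := h e he
  have hsum : ∑ k, l (rho (C.arrow k)) = 0 := by
    rw [← map_sum, sum_rho_arrow_eq_zero hdir, map_zero]
  exact (Finset.sum_eq_zero_iff_of_nonpos fun k _ => hl _ (hC.1 k)).mp hsum j (Finset.mem_univ j)

end Arrows

theorem intLat_eq_range {V : Type*} :
    intLat V = ((Int.castAddHom ℝ).compLeft V).range := by
  ext x
  simp only [intLat, Set.mem_ofPred_eq, SetLike.mem_coe, AddMonoidHom.mem_range, funext_iff,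
    AddMonoidHom.compLeft_apply, Function.comp_apply, Int.coe_castAddHom, eq_comm (a := x _),
    Classical.skolem]

theorem span_int_subset_intLat {V : Type*} {s : Set (V → ℝ)} (hs : s ⊆ intLat V) :
    (Submodule.span ℤ s : Set (V → ℝ)) ⊆ intLat V := by
  rw [intLat_eq_range] at hs ⊢
  exact (Submodule.span_le (p := ((Int.castAddHom ℝ).compLeft V).range.toIntSubmodule)).mpr hs

section EdgeContraction

open Submodule

variable {V : Type*} [DecidableEq V]

/-- The linear map induced by identifying the vertex `p.1` with `p.2`
(see `edgeContraction_single`). -/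
def edgeContraction (p : V × V) : (V → ℝ) →ₗ[ℝ] V → ℝ :=
  LinearMap.id - (LinearMap.proj p.1).smulRight (rho p)

theorem edgeContraction_apply (p : V × V) (y : V → ℝ) :
    edgeContraction p y = y - y p.1 • rho p := rfl

theorem edgeContraction_single (p : V × V) (c : V) :
    edgeContraction p (Pi.single c 1) = Pi.single (Function.update id p.1 p.2 c) 1 := by
  rw [edgeContraction_apply, rho_eq_single_sub_single]
  by_cases hc : c = p.1
  · subst hc
    simp
  · simp [Ne.symm hc, hc]

theorem edgeContraction_rho (p e : V × V) :
    edgeContraction p (rho e) =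
      rho (Prod.map (Function.update id p.1 p.2) (Function.update id p.1 p.2) e) := by
  simp only [rho_eq_single_sub_single, map_sub, edgeContraction_single, Prod.map_fst,
    Prod.map_snd]

theorem edgeContraction_rho_self {p : V × V} (hp : p.1 ≠ p.2) : edgeContraction p (rho p) = 0 := by
  simp [edgeContraction_apply, rho_eq_single_sub_single, hp]

theorem eq_smul_rho_of_edgeContraction_eq_zero {p : V × V} {y : V → ℝ}
    (hy : edgeContraction p y = 0) : y = y p.1 • rho p :=
  sub_eq_zero.mp hy

theorem edgeContraction_mem_intLat (p : V × V) {x : V → ℝ} (hx : x ∈ intLat V) :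
    edgeContraction p x ∈ intLat V := by
  obtain ⟨m, hm⟩ := hx p.1
  have hp := rho_mem_intLat p
  rw [edgeContraction_apply, hm, Int.cast_smul_eq_zsmul]
  rw [intLat_eq_range] at hx hp ⊢
  exact sub_mem hx (zsmul_mem hp m)

theorem mem_span_int_insert_rho {p : V × V} (hp : p.1 ≠ p.2) {S : Set (V → ℝ)}
    (hSL : S ⊆ intLat V)
    (hS : ∀ x ∈ intLat V, x ∈ span ℝ (edgeContraction p '' S) →
      x ∈ span ℤ (edgeContraction p '' S))
    {x : V → ℝ} (hx : x ∈ intLat V) (hxs : x ∈ span ℝ (insert (rho p) S)) :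
    x ∈ span ℤ (insert (rho p) S) := by
  set φ := edgeContraction p
  obtain ⟨r, y, hy, rfl⟩ := mem_span_insert.mp hxs
  have hφx : φ (r • rho p + y) ∈ span ℤ (φ '' S) := by
    refine hS _ (edgeContraction_mem_intLat p hx) ?_
    rw [map_add, map_smul, edgeContraction_rho_self hp, smul_zero, zero_add, ← map_span]
    exact mem_map_of_mem hy
  rw [show ⇑φ '' S = (φ.restrictScalars ℤ) '' S from rfl, ← map_span] at hφx
  obtain ⟨z, hz, hφz⟩ := hφx
  have hzL : z ∈ intLat V := span_int_subset_intLat hSL hz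
  have hxz : r • rho p + y - z ∈ intLat V := by
    rw [intLat_eq_range] at hx hzL ⊢
    exact sub_mem hx hzL
  obtain ⟨n, hn⟩ := hxz p.1
  have hker : r • rho p + y - z = (n : ℤ) • rho p := by
    rw [← Int.cast_smul_eq_zsmul ℝ, ← hn]
    refine eq_smul_rho_of_edgeContraction_eq_zero ?_
    rw [map_sub, sub_eq_zero]
    exact hφz.symm
  exact mem_span_insert.mpr ⟨n, z, hz, by rw [← hker, sub_add_cancel]⟩

theorem mem_span_int_of_linearIndependent {ι : Type*} [Finite ι] {v : ι → V → ℝ}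
    (hv : ∀ i, v i ∈ Set.range rho) (hli : LinearIndependent ℝ v) {x : V → ℝ}
    (hx : x ∈ intLat V) (hxs : x ∈ span ℝ (Set.range v)) : x ∈ span ℤ (Set.range v) := by
  revert v x
  refine Finite.induction_empty_option (P := fun ι => ∀ {v : ι → V → ℝ},
    (∀ i, v i ∈ Set.range rho) → LinearIndependent ℝ v → ∀ {x}, x ∈ intLat V →
      x ∈ span ℝ (Set.range v) → x ∈ span ℤ (Set.range v)) ?_ ?_ ?_ ι
  · intro α β σ ih v hv hli x hx hxs
    have hrange : Set.range (v ∘ σ) = Set.range v := σ.surjective.range_comp v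
    simpa only [hrange] using
      ih (v := v ∘ σ) (fun i => hv _) (hli.comp σ σ.injective) hx (hrange ▸ hxs)
  · intro v _ _ x _ hxs
    simp_all [Set.range_eq_empty]
  · intro α _ ih v hv hli x hx hxs
    obtain ⟨p, hvp⟩ := hv none
    rw [linearIndependent_option, ← hvp] at hli
    obtain ⟨hliS, hpS⟩ := hli
    have hp0 : rho p ≠ 0 := fun h => hpS (h ▸ zero_mem _)
    have hp : p.1 ≠ p.2 := fun h => hp0 (by rw [← Prod.mk.eta (p := p), h, rho_self])
    have hker : LinearMap.ker (edgeContraction p) ≤ ℝ ∙ rho p := fun y hy =>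
      mem_span_singleton.mpr ⟨y p.1, (eq_smul_rho_of_edgeContraction_eq_zero hy).symm⟩
    have hliφ : LinearIndependent ℝ (edgeContraction p ∘ v ∘ some) :=
      hliS.map (((disjoint_span_singleton' hp0).mpr hpS).mono_right hker)
    have hvφ : ∀ i, (edgeContraction p ∘ v ∘ some) i ∈ Set.range rho := fun i => by
      obtain ⟨e, he⟩ := hv (some i)
      exact ⟨_, (edgeContraction_rho p e).symm.trans (congrArg (edgeContraction p) he)⟩
    have hSL : Set.range (v ∘ some) ⊆ intLat V := Set.range_subset_iff.mpr fun i => by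
      obtain ⟨e, he⟩ := hv (some i)
      simpa only [Function.comp_apply, ← he] using rho_mem_intLat e
    rw [Option.range_eq, ← hvp] at hxs ⊢
    refine mem_span_int_insert_rho hp hSL (fun y hy hys => ?_) hx hxs
    rw [← Set.range_comp] at hys ⊢
    exact ih hvφ hliφ hy hys

end EdgeContraction

section AffineLinear

variable {k E ι : Type*} [Field k] [AddCommGroup E] [Module k E]

theorem vectorSpan_eq_span_of_zero_mem_affineSpan {s : Set E} (h0 : (0 : E) ∈ affineSpan k s) :
    vectorSpan k s = Submodule.span k s := by
  refine le_antisymm (Submodule.span_le.mpr ?_) (Submodule.span_le.mpr fun p hp => ?_)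
  · rintro _ ⟨p, hp, q, hq, rfl⟩
    exact Submodule.sub_mem _ (Submodule.subset_span hp) (Submodule.subset_span hq)
  · have := AffineSubspace.vsub_mem_direction (subset_affineSpan k s hp) h0
    rwa [direction_affineSpan, vsub_eq_sub, sub_zero] at this

theorem AffineIndependent.linearIndependent_of_zero_notMem_affineSpan {p : ι → E}
    (ha : AffineIndependent k p) (h0 : (0 : E) ∉ affineSpan k (Set.range p)) :
    LinearIndependent k p := by
  refine linearIndependent_iff'.mpr fun t g hg i hi => ?_
  by_cases hsum : ∑ j ∈ t, g j = 0
  · exact ha.eq_zero_of_sum_eq_zero hsum hg i hi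
  -- otherwise rescaling `g` to total weight one exhibits `0` as an affine combination of `p`
  refine absurd ?_ h0
  have hw : ∑ j ∈ t, (∑ j ∈ t, g j)⁻¹ * g j = 1 := by rw [← Finset.mul_sum, inv_mul_cancel₀ hsum]
  have hcomb : t.affineCombination k p (fun j => (∑ j ∈ t, g j)⁻¹ * g j) = 0 := by
    rw [Finset.affineCombination_eq_linear_combination _ _ _ hw]
    simp_rw [← smul_smul, ← Finset.smul_sum, hg, smul_zero]
  exact hcomb ▸ affineCombination_mem_affineSpan hw p

end AffineLinear

def coordSum (V : Type*) [Fintype V] : (V → ℝ) →ₗ[ℝ] ℝ := ∑ i, LinearMap.proj i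

theorem coordSum_apply {V : Type*} [Fintype V] (x : V → ℝ) : coordSum V x = ∑ i, x i := by
  simp [coordSum]

theorem rho_mem_span_of_reachable {V : Type*} [DecidableEq V] {A : Finset (V × V)} {i j : V}
    (hij : (SimpleGraph.fromRel fun a b => (a, b) ∈ A).Reachable i j) :
    rho (i, j) ∈ Submodule.span ℝ (rho '' (A : Set (V × V))) := by
  obtain ⟨w⟩ := hij
  induction w with
  | nil => simp [rho_self]
  | @cons u v w hadj _ ih =>
    rw [← rho_add_rho u v w]
    refine add_mem ?_ ih
    rcases ((SimpleGraph.fromRel_adj _ u v).mp hadj).2 with h | h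
    · exact Submodule.subset_span (Set.mem_image_of_mem rho h)
    · have := neg_mem (Submodule.subset_span (R := ℝ) (Set.mem_image_of_mem rho h))
      rwa [← rho_swap] at this

section Dimension

open Submodule

variable {V : Type*} [Fintype V] [DecidableEq V]

theorem finrank_ker_coordSum_add_one [Nonempty V] :
    Module.finrank ℝ (LinearMap.ker (coordSum V)) + 1 = Fintype.card V := by
  obtain ⟨i⟩ := ‹Nonempty V›
  have hne : coordSum V ≠ 0 := fun h => by
    simpa [coordSum_apply] using LinearMap.congr_fun h (Pi.single i 1)
  rw [Module.Dual.finrank_ker_add_one_of_ne_zero hne, Module.finrank_fintype_fun_eq_card]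

theorem rho_mem_ker_coordSum (e : V × V) : rho e ∈ LinearMap.ker (coordSum V) := by
  simp [coordSum_apply, rho_eq_single_sub_single, Finset.sum_sub_distrib]

theorem span_rho_image_eq_ker_coordSum {A : Finset (V × V)} (hconn : GConnected A) :
    span ℝ (rho '' (A : Set (V × V))) = LinearMap.ker (coordSum V) := by
  refine le_antisymm (span_le.mpr ?_) fun x hx => ?_
  · rintro _ ⟨e, -, rfl⟩
    exact rho_mem_ker_coordSum e
  obtain ⟨i₀⟩ := hconn.nonempty
  have hx : ∑ i, x i = 0 := by rwa [LinearMap.mem_ker, coordSum_apply] at hx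
  have hdecomp : x = ∑ i, x i • rho (i, i₀) := by
    funext k
    simp [rho_eq_single_sub_single, Pi.single_apply, mul_sub, Finset.sum_sub_distrib, hx]
  rw [hdecomp]
  exact sum_mem fun i _ => smul_mem _ _ (rho_mem_span_of_reachable (hconn.preconnected i i₀))

theorem pdim_polyG_add_one {A : Finset (V × V)} (hconn : GConnected A)
    (h0 : (0 : V → ℝ) ∈ polyG A) : pdim (polyG A) + 1 = Fintype.card V := by
  have h0' : (0 : V → ℝ) ∈ affineSpan ℝ (rho '' (A : Set (V × V))) :=
    convexHull_subset_affineSpan _ h0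
  have : Nonempty V := hconn.nonempty
  rw [pdim, polyG, ← direction_affineSpan, affineSpan_convexHull, direction_affineSpan,
    vectorSpan_eq_span_of_zero_mem_affineSpan h0', span_rho_image_eq_ker_coordSum hconn,
    finrank_ker_coordSum_add_one]

end Dimension

section Facets

variable {V : Type*} [DecidableEq V] {A : Finset (V × V)} {F : Set (V → ℝ)}

theorem nonempty_of_mem_polyG {x : V → ℝ} (hx : x ∈ polyG A) : A.Nonempty :=
  Finset.coe_nonempty.mp (convexHull_nonempty_iff.mp ⟨x, hx⟩).of_image

theorem extremePoints_subset_rho_image (hF : IsExposed ℝ (polyG A) F) :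
    F.extremePoints ℝ ⊆ rho '' (A : Set (V × V)) := fun _ hw =>
  extremePoints_convexHull_subset (hF.isExtreme.extremePoints_subset_extremePoints hw)

theorem finite_extremePoints (hF : IsExposed ℝ (polyG A) F) : (F.extremePoints ℝ).Finite :=
  (A.finite_toSet.image rho).subset (extremePoints_subset_rho_image hF)

theorem convexHull_extremePoints_of_isExposed (hF : IsExposed ℝ (polyG A) F) :
    convexHull ℝ (F.extremePoints ℝ) = F := by
  have hP : IsCompact (polyG A) := (A.finite_toSet.image rho).isCompact_convexHull ℝ
  rw [← (finite_extremePoints hF).isCompact_convexHull ℝ |>.isClosed.closure_eq]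
  exact closure_convexHull_extremePoints (hF.isCompact hP) (hF.convex (convex_convexHull ℝ _))

theorem map_eq_zero_on_polyG_of_nonpos (h : EveryArrowInDirCycle A) (l : (V → ℝ) →ₗ[ℝ] ℝ)
    (hl : ∀ y ∈ polyG A, l y ≤ 0) : ∀ y ∈ polyG A, l y = 0 := by
  refine convexHull_min ?_ (LinearMap.ker l).convex
  rintro _ ⟨e, he, rfl⟩
  exact map_rho_eq_zero_of_nonpos h l
    (fun e' he' => hl _ (subset_convexHull ℝ _ (Set.mem_image_of_mem rho he'))) he

theorem zero_notMem_affineSpan_of_isFacetOf (h : EveryArrowInDirCycle A)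
    (hF : IsFacetOf F (polyG A)) : (0 : V → ℝ) ∉ affineSpan ℝ F := by
  obtain ⟨hexp, ⟨x₀, hx₀⟩, hdim⟩ := hF
  obtain ⟨l, rfl⟩ := hexp ⟨x₀, hx₀⟩
  obtain ⟨hx₀P, hx₀max⟩ := hx₀
  have hpos : 0 < l x₀ := by
    have h0 := zero_mem_polyG h (nonempty_of_mem_polyG hx₀P)
    refine lt_of_le_of_ne (by simpa using hx₀max 0 h0) fun hzero => ?_
    have hl := map_eq_zero_on_polyG_of_nonpos h (l : (V → ℝ) →ₗ[ℝ] ℝ) fun y hy =>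
      hzero ▸ hx₀max y hy
    have hFP : {x ∈ polyG A | ∀ y ∈ polyG A, l y ≤ l x} = polyG A :=
      Set.sep_eq_self_iff_mem_true.mpr fun x hx y hy => ((hl y hy).trans (hl x hx).symm).le
    rw [hFP] at hdim
    omega
  have hspan : affineSpan ℝ {x ∈ polyG A | ∀ y ∈ polyG A, l y ≤ l x} ≤
      AffineSubspace.mk' x₀ (LinearMap.ker (l : (V → ℝ) →ₗ[ℝ] ℝ)) := by
    refine affineSpan_le.mpr fun y hy => ?_
    rw [SetLike.mem_coe, AffineSubspace.mem_mk', vsub_eq_sub, LinearMap.mem_ker, map_sub,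
      sub_eq_zero]
    exact le_antisymm (hx₀max y hy.1) (hy.2 x₀ hx₀P)
  intro h0
  have := hspan h0
  rw [AffineSubspace.mem_mk', vsub_eq_sub, zero_sub, LinearMap.mem_ker, map_neg,
    neg_eq_zero] at this
  exact hpos.ne' this

theorem linearIndependent_extremePoints_of_isFacetOf (h : EveryArrowInDirCycle A)
    (hF : IsFacetOf F (polyG A))
    (haff : AffineIndependent ℝ ((↑) : F.extremePoints ℝ → V → ℝ)) :
    LinearIndependent ℝ ((↑) : F.extremePoints ℝ → V → ℝ) :=
  haff.linearIndependent_of_zero_notMem_affineSpan fun h0 =>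
    zero_notMem_affineSpan_of_isFacetOf h hF <|
      affineSpan_mono ℝ (by simpa using extremePoints_subset) h0

theorem span_extremePoints_of_isFacetOf [Fintype V] (hconn : GConnected A)
    (h : EveryArrowInDirCycle A) (hF : IsFacetOf F (polyG A))
    (haff : AffineIndependent ℝ ((↑) : F.extremePoints ℝ → V → ℝ)) :
    Submodule.span ℝ (F.extremePoints ℝ) = LinearMap.ker (coordSum V) := by
  obtain ⟨hexp, ⟨x, hx⟩, hdim⟩ := hF
  set W := F.extremePoints ℝ
  have : Fintype W := (finite_extremePoints hexp).fintype
  have hWF : convexHull ℝ W = F := convexHull_extremePoints_of_isExposed hexp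
  have : Nonempty W := by
    refine (convexHull_nonempty_iff (𝕜 := ℝ)).mp ?_ |>.to_subtype
    rw [hWF]
    exact ⟨x, hx⟩
  have : Nonempty V := hconn.nonempty
  have hFW : pdim F = Module.finrank ℝ (vectorSpan ℝ W) := by
    rw [pdim, ← hWF, ← direction_affineSpan, affineSpan_convexHull, direction_affineSpan]
  have hW : Module.finrank ℝ (vectorSpan ℝ W) + 1 = Fintype.card W := by
    have := haff.finrank_vectorSpan_add_one
    rwa [Subtype.range_coe] at this
  have hP := pdim_polyG_add_one hconn (zero_mem_polyG h (nonempty_of_mem_polyG (hexp.subset hx)))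
  have hspan : Module.finrank ℝ (Submodule.span ℝ W) = Fintype.card W := by
    have := finrank_span_eq_card
      (linearIndependent_extremePoints_of_isFacetOf h ⟨hexp, ⟨x, hx⟩, hdim⟩ haff)
    rwa [Subtype.range_coe] at this
  have hker := finrank_ker_coordSum_add_one (V := V)
  refine Submodule.eq_of_le_of_finrank_le (Submodule.span_le.mpr fun w hw => ?_) (by omega)
  obtain ⟨e, -, rfl⟩ := extremePoints_subset_rho_image hexp hw
  exact rho_mem_ker_coordSum e

end Facets

/-- if every arrow lies in a directed cycle and `P_G` is simplicial, then
`P_G` is smooth: the vertices of every facet form a `ℤ`-basis of the lattice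
`ℤ^d ∩ {x : Σ xᵢ = 0}`. -/
theorem stmt9 {d : ℕ} (A : Finset (Fin d × Fin d)) (hconn : GConnected A)
    (h : EveryArrowInDirCycle A) (hs : Simplicial (polyG A)) :
    ∀ F : Set (Fin d → ℝ), IsFacetOf F (polyG A) →
      IsZBasisOf (F.extremePoints ℝ) (latticeSet (Fin d)) := by
  intro F hF
  have haff := hs F hF
  have hli := linearIndependent_extremePoints_of_isFacetOf h hF haff
  have hspan := span_extremePoints_of_isFacetOf hconn h hF haff
  have hW := extremePoints_subset_rho_image hF.1
  have := (finite_extremePoints hF.1).to_subtype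
  refine ⟨fun w hw => ?_, hli.restrict_scalars' ℤ, fun x ⟨hx, hsum⟩ => ?_⟩
  · obtain ⟨e, -, rfl⟩ := hW hw
    exact ⟨rho_mem_intLat e, (coordSum_apply _).symm.trans (rho_mem_ker_coordSum e)⟩
  · have hxs : x ∈ Submodule.span ℝ (Set.range ((↑) : F.extremePoints ℝ → Fin d → ℝ)) := by
      rwa [Subtype.range_coe, hspan, LinearMap.mem_ker, coordSum_apply]
    simpa using mem_span_int_of_linearIndependent
      (fun w => Set.image_subset_range _ _ (hW w.2)) hli hx hxs
end

section
/- Let G be a connected symmetric directed graph whose underlying undirected graph has every two-connected component equal to a single edge or an odd cycle. Then G has no homogeneous cycle, and consequently P_G is simplicial. -/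
open Finset

/-- A subgraph is two-connected if it has at least two vertices and removing any single
vertex leaves it connected. -/
def TwoConn {W : Type*} (G : SimpleGraph W) (H : G.Subgraph) : Prop :=
  2 ≤ H.verts.ncard ∧ ∀ w : W, ((H.deleteVerts {w}).coe).Connected

/-- A two-connected component: a maximal two-connected subgraph. -/
def IsBlock {W : Type*} (G : SimpleGraph W) (H : G.Subgraph) : Prop :=
  TwoConn G H ∧ ∀ H' : G.Subgraph, TwoConn G H' → H ≤ H' → H' = H

/-- The subgraph consists of a single edge. -/
def IsSingleEdge {W : Type*} (G : SimpleGraph W) (H : G.Subgraph) : Prop :=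
  ∃ (a b : W) (h : G.Adj a b), H = G.subgraphOfAdj h

/-- The subgraph is an odd cycle. -/
def IsOddCycleSub {W : Type*} (G : SimpleGraph W) (H : G.Subgraph) : Prop :=
  ∃ (l : ℕ) (hl : 3 ≤ l) (v : Fin l → W), Odd l ∧ Function.Injective v ∧
    H.verts = Set.range v ∧
    ∀ x y : W, H.Adj x y ↔ ∃ j : Fin l,
      (x = v j ∧ y = v (succAt (by omega) j)) ∨ (y = v j ∧ x = v (succAt (by omega) j))

/-- The simple graph `G` contains no cycle of even length. -/
def NoEvenCycleSG {W : Type*} (G : SimpleGraph W) : Prop :=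
  ¬ ∃ (u : W) (w : G.Walk u u), w.IsCycle ∧ Even w.length

/-!
A homogeneous cycle has even length at least four (with two edges it would use the same arrow
twice), and its vertices and edges form a two-connected subgraph of the underlying graph, hence lie
in a block. That block is neither an edge, having too few vertices, nor an odd cycle: an injective
map from a cycle into a cycle graph sending edges to edges is onto, so both have the same length.

For simpliciality, a facet `F` of `P_G` is the set where a linear form `l` attains its maximum
`c` on `P_G`; since `P_G = -P_G`, `c ≠ 0`. The vertices of `F` are among the `ρ(e)` with
`l(ρ(e)) = c`. In a linear dependence between them, every vertex of the support meets at least two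
of its arrows, so a non-backtracking walk in the support closes up into a cycle. Summing the
potential `i ↦ l(e_i)` along it, each forward arrow contributes `-c` and each backward arrow `c`,
so the cycle is homogeneous. Hence the vertices of `F` are linearly, so affinely, independent.
-/

section SuccAt

variable {l : ℕ} (h : 0 < l)

theorem val_succAt_iterate (j : Fin l) (k : ℕ) : ((succAt h)^[k] j : ℕ) = (j + k) % l := by
  induction k with
  | zero => exact (Nat.mod_eq_of_lt j.isLt).symm
  | succ k ih =>
    rw [Function.iterate_succ_apply']
    simp only [succAt, ih, Nat.mod_add_mod, add_assoc]

theorem succAt_iterate_eq_self_iff (j : Fin l) (k : ℕ) : (succAt h)^[k] j = j ↔ l ∣ k := by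
  rw [Fin.ext_iff, val_succAt_iterate, ← Nat.add_modEq_left_iff, Nat.ModEq,
    Nat.mod_eq_of_lt j.isLt]

theorem exists_lt_succAt_iterate_eq (i j : Fin l) : ∃ k < l, (succAt h)^[k] i = j := by
  refine ⟨(j + l - i) % l, Nat.mod_lt _ h, Fin.ext ?_⟩
  have := i.isLt
  rw [val_succAt_iterate, Nat.add_mod_mod, show (i : ℕ) + (j + l - i) = j + l by omega,
    Nat.add_mod_right, Nat.mod_eq_of_lt j.isLt]

theorem succAt_surjective : Function.Surjective (succAt h) := fun j =>
  ⟨(succAt h)^[l - 1] j, by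
    rw [← Function.iterate_succ_apply' (f := succAt h), Nat.succ_eq_add_one,
      Nat.sub_add_cancel h, succAt_iterate_eq_self_iff]⟩

theorem succAt_bijective : Function.Bijective (succAt h) :=
  Finite.surjective_iff_bijective.mp (succAt_surjective h)

theorem succAt_ne_self (hl : 2 ≤ l) (j : Fin l) : succAt h j ≠ j := by
  simpa using (succAt_iterate_eq_self_iff h j 1).not.mpr (Nat.not_dvd_of_pos_of_lt one_pos hl)

theorem succAt_succAt_ne_self (hl : 3 ≤ l) (j : Fin l) : succAt h (succAt h j) ≠ j :=
  (succAt_iterate_eq_self_iff h j 2).not.mpr (Nat.not_dvd_of_pos_of_lt two_pos hl)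

end SuccAt

namespace PreCycle

variable {V : Type*} (C : PreCycle V)

theorem arrow_injective (hl : 3 ≤ C.l) : Function.Injective C.arrow := by
  have no_flip : ∀ i j, C.v i = C.v (C.nxt j) → C.v (C.nxt i) ≠ C.v j := fun i j h₁ h₂ =>
    succAt_succAt_ne_self C.pos hl j (by have := C.inj h₂; rwa [C.inj h₁] at this)
  intro i j hij
  simp only [arrow] at hij
  split_ifs at hij <;> simp only [Prod.mk.injEq] at hij
  · exact C.inj hij.1
  · exact (no_flip i j hij.1 hij.2).elim
  · exact (no_flip i j hij.2 hij.1).elim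
  · exact C.inj hij.2

theorem homogeneous_of_level (a : V → ℝ) {c : ℝ} (hc : c ≠ 0)
    (h : ∀ j, a (C.arrow j).1 - a (C.arrow j).2 = c) : C.Homogeneous := by
  have hstep : ∀ j, a (C.v (C.nxt j)) - a (C.v j) = if C.ε j then -c else c := by
    intro j
    have := h j
    simp only [arrow] at this
    split_ifs at this ⊢ <;> linarith
  have htel : ∑ j, (a (C.v (C.nxt j)) - a (C.v j)) = 0 := by
    rw [Finset.sum_sub_distrib, sub_eq_zero]
    exact (succAt_bijective C.pos).sum_comp fun j => a (C.v j)
  simp only [hstep, Finset.sum_ite, Finset.sum_const, nsmul_eq_mul] at htel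
  have hbal : #{j | C.ε j = true} = #{j | ¬C.ε j = true} := by
    have : (#{j | C.ε j = true} : ℝ) * c = #{j | ¬C.ε j = true} * c := by
      linear_combination -htel
    exact_mod_cast mul_right_cancel₀ hc this
  have hcard := card_filter_add_card_filter_not (s := univ) fun j => C.ε j = true
  rw [card_univ, Fintype.card_fin] at hcard
  unfold Homogeneous
  omega

theorem three_le_of_homogeneous (hinj : Function.Injective C.arrow) (hC : C.Homogeneous) :
    3 ≤ C.l := by
  by_contra hl
  obtain ⟨l, hl2, v, ε, hv⟩ := C
  obtain rfl : l = 2 := by simp only at hl; omega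
  simp only [Homogeneous, Finset.card_filter, Fin.sum_univ_two] at hC
  have h01 := hinj.ne (show (0 : Fin 2) ≠ 1 by decide)
  simp only [arrow, nxt, show succAt (by omega) (0 : Fin 2) = 1 from rfl,
    show succAt (by omega) (1 : Fin 2) = 0 from rfl] at h01
  -- with two edges, one forward and one backward, both arrows are the same
  cases h0 : ε 0 <;> cases h1 : ε 1 <;> simp_all

theorem fromRel_adj {S : Finset (V × V)} (hS : ∀ j, C.arrow j ∈ S) (j : Fin C.l) :
    (SimpleGraph.fromRel fun x y => (x, y) ∈ S).Adj (C.v j) (C.v (C.nxt j)) := by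
  refine ⟨C.inj.ne (succAt_ne_self C.pos C.two_le j).symm, ?_⟩
  have := hS j
  unfold arrow at this
  split_ifs at this
  exacts [Or.inl this, Or.inr this]

end PreCycle

theorem SimpleGraph.Subgraph.connected_of_chain {V : Type*} {G : SimpleGraph V} {H : G.Subgraph}
    (f : ℕ → V) (N : ℕ) (hmem : ∀ k ≤ N, f k ∈ H.verts)
    (hadj : ∀ k < N, H.Adj (f k) (f (k + 1))) (hcover : ∀ x ∈ H.verts, ∃ k ≤ N, f k = x) :
    H.Connected := by
  have hreach : ∀ k (hk : k ≤ N),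
      H.coe.Reachable ⟨f 0, hmem 0 N.zero_le⟩ ⟨f k, hmem k hk⟩ := by
    intro k
    induction k with
    | zero => exact fun _ => .rfl
    | succ k ih => exact fun hk => (ih (by omega)).trans (Adj.reachable (hadj k hk))
  rw [Subgraph.connected_iff', connected_iff]
  refine ⟨fun ⟨x, hx⟩ ⟨y, hy⟩ => ?_, ⟨⟨f 0, hmem 0 N.zero_le⟩⟩⟩
  obtain ⟨i, hi, rfl⟩ := hcover x hx
  obtain ⟨j, hj, rfl⟩ := hcover y hy
  exact (hreach i hi).symm.trans (hreach j hj)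

theorem exists_isBlock_le {W : Type*} [Finite W] {G : SimpleGraph W} {H : G.Subgraph}
    (hH : TwoConn G H) : ∃ B, IsBlock G B ∧ H ≤ B := by
  obtain ⟨B, hHB, hB⟩ := (Set.toFinite {H' | TwoConn G H'}).exists_le_maximal hH
  exact ⟨B, ⟨hB.prop, fun H' hH' hle => hB.eq_of_ge hH' hle⟩, hHB⟩

theorem eq_of_injective_of_cyclic_adj {n m : ℕ} (hn : 3 ≤ n) (hm : 0 < m) (φ : Fin n → Fin m)
    (hφ : Function.Injective φ)
    (hadj : ∀ j, φ (succAt (by omega) j) = succAt hm (φ j) ∨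
      φ j = succAt hm (φ (succAt (by omega) j))) :
    n = m := by
  have hn0 : 0 < n := by omega
  have hclosed : ∀ j, ∃ i, φ i = succAt hm (φ j) := by
    intro j
    obtain ⟨i, rfl⟩ := succAt_surjective hn0 j
    rcases hadj (succAt hn0 i) with h | h
    · exact ⟨_, h⟩
    rcases hadj i with h' | h'
    · exact absurd (hφ ((succAt_bijective hm).injective (h.symm.trans h')))
        (succAt_succAt_ne_self hn0 hn i)
    · exact ⟨i, h'⟩
  have hsurj : Function.Surjective φ := by
    intro t
    obtain ⟨k, -, rfl⟩ := exists_lt_succAt_iterate_eq hm (φ ⟨0, hn0⟩) t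
    induction k with
    | zero => exact ⟨_, rfl⟩
    | succ k ih =>
      obtain ⟨i, hi⟩ := ih
      obtain ⟨i', hi'⟩ := hclosed i
      exact ⟨i', by rw [Function.iterate_succ_apply', ← hi, hi']⟩
  simpa using Fintype.card_congr (Equiv.ofBijective φ ⟨hφ, hsurj⟩)

namespace PreCycle

variable {V : Type*} (C : PreCycle V) {G : SimpleGraph V}
  (hC : ∀ j, G.Adj (C.v j) (C.v (C.nxt j)))

def toSubgraph : G.Subgraph := ⨆ j, G.subgraphOfAdj (hC j)

theorem verts_toSubgraph : (C.toSubgraph hC).verts = Set.range C.v := by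
  simp only [toSubgraph, SimpleGraph.Subgraph.verts_iSup, SimpleGraph.subgraphOfAdj_verts]
  refine subset_antisymm (Set.iUnion_subset fun j => Set.insert_subset ⟨j, rfl⟩ (by simp)) ?_
  rintro _ ⟨j, rfl⟩
  exact Set.mem_iUnion.mpr ⟨j, by simp⟩

theorem ncard_verts_toSubgraph : (C.toSubgraph hC).verts.ncard = C.l := by
  rw [verts_toSubgraph, ← Set.image_univ, Set.ncard_image_of_injective _ C.inj, Set.ncard_univ,
    Nat.card_eq_fintype_card, Fintype.card_fin]

theorem toSubgraph_adj (j : Fin C.l) : (C.toSubgraph hC).Adj (C.v j) (C.v (C.nxt j)) :=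
  SimpleGraph.Subgraph.iSup_adj.mpr ⟨j, rfl⟩

theorem exists_walk_avoiding (w : V) : ∃ (s : Fin C.l) (N : ℕ), (∀ k ≤ N, C.v (C.nxt^[k] s) ≠ w) ∧
    ∀ j, C.v j ≠ w → ∃ k ≤ N, C.nxt^[k] s = j := by
  by_cases hw : w ∈ Set.range C.v
  -- start right after `w` and stop right before it
  · obtain ⟨m, rfl⟩ := hw
    have hret : ∀ k, C.nxt^[k] (C.nxt m) = m ↔ C.l ∣ k + 1 := fun k => by
      rw [← Function.iterate_succ_apply]; exact succAt_iterate_eq_self_iff C.pos m _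
    refine ⟨C.nxt m, C.l - 2, fun k hk heq => ?_, fun j hj => ?_⟩
    · exact Nat.not_dvd_of_pos_of_lt k.succ_pos (by have := C.two_le; omega)
        ((hret k).mp (C.inj heq))
    · obtain ⟨k, hk, rfl⟩ := exists_lt_succAt_iterate_eq C.pos (C.nxt m) j
      refine ⟨k, ?_, rfl⟩
      by_contra hk'
      exact hj (congrArg C.v ((hret k).mpr ⟨1, by omega⟩))
  · refine ⟨⟨0, C.pos⟩, C.l - 1, fun k _ heq => hw ⟨_, heq⟩, fun j _ => ?_⟩
    obtain ⟨k, hk, h⟩ := exists_lt_succAt_iterate_eq C.pos ⟨0, C.pos⟩ j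
    exact ⟨k, by omega, h⟩

theorem twoConn_toSubgraph : TwoConn G (C.toSubgraph hC) := by
  refine ⟨by rw [ncard_verts_toSubgraph]; exact C.two_le, fun w => ?_⟩
  obtain ⟨s, N, havoid, hcover⟩ := C.exists_walk_avoiding w
  have hmem : ∀ k ≤ N, C.v (C.nxt^[k] s) ∈ ((C.toSubgraph hC).deleteVerts {w}).verts :=
    fun k hk => ⟨by rw [verts_toSubgraph]; exact ⟨_, rfl⟩, havoid k hk⟩
  refine SimpleGraph.Subgraph.connected_iff'.mp <|
    SimpleGraph.Subgraph.connected_of_chain _ N hmem (fun k hk => ?_) fun x hx => ?_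
  · have hnext := hmem (k + 1) hk
    rw [Function.iterate_succ_apply'] at hnext ⊢
    rw [SimpleGraph.Subgraph.deleteVerts_adj]
    exact ⟨(hmem k hk.le).1, (hmem k hk.le).2, hnext.1, hnext.2, C.toSubgraph_adj hC _⟩
  · obtain ⟨⟨j, rfl⟩, hj⟩ : x ∈ Set.range C.v ∧ x ≠ w := by
      rw [← verts_toSubgraph C hC]; exact hx
    obtain ⟨k, hk, rfl⟩ := hcover j hj
    exact ⟨k, hk, rfl⟩

theorem not_isSingleEdge_of_toSubgraph_le (hl : 3 ≤ C.l) {H : G.Subgraph}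
    (hle : C.toSubgraph hC ≤ H) : ¬IsSingleEdge G H := by
  rintro ⟨x, y, hxy, rfl⟩
  have := Set.ncard_le_ncard hle.1 ((Set.finite_singleton y).insert x)
  rw [ncard_verts_toSubgraph, SimpleGraph.subgraphOfAdj_verts, Set.ncard_pair hxy.ne] at this
  omega

theorem odd_l_of_toSubgraph_le (hl : 3 ≤ C.l) {H : G.Subgraph} (hle : C.toSubgraph hC ≤ H)
    (hH : IsOddCycleSub G H) : Odd C.l := by
  obtain ⟨m, hm, u, hodd, hu, hverts, hadj⟩ := hH
  have hφ : ∀ j, ∃ t, u t = C.v j := fun j => by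
    rw [← Set.mem_range, ← hverts]
    exact hle.1 (by rw [verts_toSubgraph]; exact ⟨j, rfl⟩)
  choose φ hφ using hφ
  have hpos : 0 < m := by omega
  have hlm : C.l = m := by
    refine eq_of_injective_of_cyclic_adj hl hpos φ
      (fun i j h => C.inj (by rw [← hφ i, ← hφ j, h])) fun j => ?_
    obtain ⟨t, ⟨h₁, h₂⟩ | ⟨h₁, h₂⟩⟩ := (hadj _ _).mp (hle.2 (C.toSubgraph_adj hC j))
    · left
      rw [hu ((hφ j).trans h₁)]
      exact hu ((hφ _).trans h₂)
    · right
      rw [show φ (succAt _ j) = t from hu ((hφ _).trans h₁)]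
      exact hu ((hφ j).trans h₂)
  rwa [hlm]

end PreCycle

theorem no_homogeneous_cycle {V : Type*} [Finite V] [DecidableEq V] (A : Finset (V × V))
    (hb : ∀ H : (SimpleGraph.fromRel fun i j : V => (i, j) ∈ A).Subgraph,
      IsBlock _ H → IsSingleEdge _ H ∨ IsOddCycleSub _ H) :
    ¬∃ C : PreCycle V, C.IsCycleIn A ∧ C.Homogeneous := by
  rintro ⟨C, ⟨hA, hinj⟩, hhom⟩
  have hl := C.three_le_of_homogeneous hinj hhom
  have hC := C.fromRel_adj hA
  obtain ⟨B, hB, hle⟩ := exists_isBlock_le (C.twoConn_toSubgraph hC)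
  rcases hb B hB with h | h
  · exact C.not_isSingleEdge_of_toSubgraph_le hC hl hle h
  · exact Nat.not_odd_iff_even.mpr ⟨_, hhom.symm.trans (two_mul _)⟩
      (C.odd_l_of_toSubgraph_le hC hl hle h)

section CycleFinding

variable {V : Type*}

theorem exists_nonbacktracking_seq (R : V → V → Prop) (hR : ∀ x y, R x y → ∃ z, R y z ∧ z ≠ x)
    {x₀ y₀ : V} (h₀ : R x₀ y₀) : ∃ p : ℕ → V, ∀ n, R (p n) (p (n + 1)) ∧ p (n + 2) ≠ p n := by
  choose next hnext hne using hR
  let step : {q : V × V // R q.1 q.2} → {q : V × V // R q.1 q.2} :=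
    fun q => ⟨(q.1.2, next _ _ q.2), hnext _ _ q.2⟩
  let q : ℕ → {q : V × V // R q.1 q.2} := fun n => step^[n] ⟨(x₀, y₀), h₀⟩
  have hq : ∀ n, q (n + 1) = step (q n) := fun n => Function.iterate_succ_apply' _ _ _
  refine ⟨fun n => (q n).1.1, fun n => ?_⟩
  simp only [hq]
  exact ⟨(q n).2, hne _ _ (q n).2⟩

theorem exists_first_repeat [Finite V] (p : ℕ → V) :
    ∃ n m, n < m ∧ p n = p m ∧ ∀ i j, i < j → j < m → p i ≠ p j := by
  classical
  have hex : ∃ m, ∃ n < m, p n = p m := by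
    obtain ⟨i, j, hij, h⟩ := Finite.exists_ne_map_eq_of_infinite p
    rcases hij.lt_or_gt with h' | h'
    exacts [⟨j, i, h', h⟩, ⟨i, j, h', h.symm⟩]
  obtain ⟨n, hn, h⟩ := Nat.find_spec hex
  exact ⟨n, Nat.find hex, hn, h, fun i j hij hj hp => Nat.find_min hex hj ⟨i, hij, hp⟩⟩

theorem exists_preCycle_of_nonbacktracking [Finite V] (S : Set (V × V)) (p : ℕ → V)
    (hadj : ∀ n, (SimpleGraph.fromRel fun x y => (x, y) ∈ S).Adj (p n) (p (n + 1)))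
    (hnb : ∀ n, p (n + 2) ≠ p n) : ∃ C : PreCycle V, 3 ≤ C.l ∧ ∀ j, C.arrow j ∈ S := by
  classical
  obtain ⟨n, m, hnm, hrep, hfirst⟩ := exists_first_repeat p
  have hl : 3 ≤ m - n := by
    rcases (show m = n + 1 ∨ m = n + 2 ∨ n + 3 ≤ m by omega) with rfl | rfl | h
    · exact absurd hrep (hadj n).1
    · exact absurd hrep.symm (hnb n)
    · omega
  let C : PreCycle V :=
    { l := m - n
      two_le := by omega
      v := fun k => p (n + k)
      ε := fun k => decide ((p (n + k), p (n + k + 1)) ∈ S)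
      inj := fun i j h => Fin.ext <| by
        have := i.isLt
        have := j.isLt
        by_contra hij
        rcases Nat.lt_or_gt_of_ne hij with hij | hij
        · exact hfirst _ _ (by omega : n + i < n + j) (by omega) h
        · exact hfirst _ _ (by omega : n + j < n + i) (by omega) h.symm }
  have hnxt : ∀ j, C.v (C.nxt j) = p (n + j + 1) := by
    intro j
    have hj : (j : ℕ) < m - n := j.isLt
    change p (n + (j + 1) % (m - n)) = _
    rcases (show (j : ℕ) + 1 < m - n ∨ (j : ℕ) + 1 = m - n by omega) with h | h
    · rw [Nat.mod_eq_of_lt h, add_assoc]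
    · rw [h, Nat.mod_self, add_zero, hrep]
      congr 1
      omega
  refine ⟨C, hl, fun j => ?_⟩
  simp only [PreCycle.arrow, hnxt]
  change (if decide ((p (n + j), p (n + j + 1)) ∈ S) then _ else _) ∈ S
  split_ifs with h
  · simpa using h
  · exact (hadj (n + j)).2.resolve_left (by simpa using h)

end CycleFinding

section Simplicial

variable {V : Type*} [DecidableEq V]

theorem neg_rho (e : V × V) : -rho e = rho e.swap := by
  ext k
  simp [rho]

theorem exists_adj_ne_of_sum_smul_rho_eq_zero {T : Finset (V × V)} {γ : V × V → ℝ}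
    (hγ : ∀ e ∈ T, γ e ≠ 0) (hsum : ∑ e ∈ T, γ e • rho e = 0)
    (hanti : ∀ x y, (x, y) ∈ T → (y, x) ∉ T) {x y : V}
    (hxy : (SimpleGraph.fromRel fun a b => (a, b) ∈ T).Adj x y) :
    ∃ z, (SimpleGraph.fromRel fun a b => (a, b) ∈ T).Adj y z ∧ z ≠ x := by
  by_contra! hz
  obtain ⟨hne, hT⟩ := hxy
  have hy : ∑ e ∈ T, γ e * rho e y = 0 := by simpa using congrFun hsum y
  -- the arrow `e₀` between `x` and `y` is the only arrow of `T` at `y`, so `γ e₀ = 0`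
  obtain ⟨e₀, he₀, hrev, hρ₀, hxy₀⟩ :
      ∃ e₀ ∈ T, e₀.swap ∉ T ∧ rho e₀ y ≠ 0 ∧ (e₀ = (y, x) ∨ e₀ = (x, y)) := by
    rcases hT with h | h
    · exact ⟨_, h, hanti _ _ h, by simp [rho, hne.symm], Or.inr rfl⟩
    · exact ⟨_, h, hanti _ _ h, by simp [rho, hne.symm], Or.inl rfl⟩
  rw [Finset.sum_eq_single e₀ (fun e he hne₀ => ?_) (absurd he₀)] at hy
  · exact hγ e₀ he₀ ((mul_eq_zero.mp hy).resolve_right hρ₀)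
  refine mul_eq_zero_of_right _ (by_contra fun hρ => ?_)
  have hxy : e = (y, x) ∨ e = (x, y) := by
    obtain ⟨a, b⟩ := e
    by_cases ha : a = y
    · have hb : y ≠ b := fun hyb => hρ (by simp [rho, ← ha, ← hyb])
      rw [ha, hz b ⟨hb, Or.inl (ha ▸ he)⟩]
      exact Or.inl rfl
    · have hb : b = y := by_contra fun hb => hρ (by simp [rho, Ne.symm ha, Ne.symm hb])
      rw [hb, hz a ⟨Ne.symm ha, Or.inr (hb ▸ he)⟩]
      exact Or.inr rfl
  rcases hxy with rfl | rfl <;> rcases hxy₀ with rfl | rfl <;> simp_all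

theorem exists_homogeneous_cycle_of_sum_smul_rho_eq_zero [Finite V] (a : V → ℝ) {c : ℝ}
    (hc : c ≠ 0) {T : Finset (V × V)} (hT : T.Nonempty) (hlevel : ∀ e ∈ T, a e.1 - a e.2 = c)
    {γ : V × V → ℝ} (hγ : ∀ e ∈ T, γ e ≠ 0) (hsum : ∑ e ∈ T, γ e • rho e = 0) :
    ∃ C : PreCycle V, C.IsCycleIn T ∧ C.Homogeneous := by
  have hanti : ∀ x y, (x, y) ∈ T → (y, x) ∉ T := fun x y h h' =>
    hc (by linarith [hlevel _ h, hlevel _ h'])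
  obtain ⟨e₀, he₀⟩ := hT
  have h₀ : (SimpleGraph.fromRel fun x y => (x, y) ∈ T).Adj e₀.1 e₀.2 :=
    ⟨fun h => hc (by rw [← hlevel _ he₀, h, sub_self]), Or.inl he₀⟩
  obtain ⟨p, hp⟩ := exists_nonbacktracking_seq _
    (fun _ _ => exists_adj_ne_of_sum_smul_rho_eq_zero hγ hsum hanti) h₀
  obtain ⟨C, hl, hCT⟩ := exists_preCycle_of_nonbacktracking (T : Set (V × V)) p
    (fun n => (hp n).1) fun n => (hp n).2
  exact ⟨C, ⟨hCT, C.arrow_injective hl⟩, C.homogeneous_of_level a hc fun j => hlevel _ (hCT j)⟩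

theorem linearIndepOn_rho_of_level [Finite V] (A : Finset (V × V))
    (hA : ¬∃ C : PreCycle V, C.IsCycleIn A ∧ C.Homogeneous) (a : V → ℝ) {c : ℝ} (hc : c ≠ 0) :
    LinearIndepOn ℝ rho {e | e ∈ A ∧ a e.1 - a e.2 = c} := by
  by_contra h
  obtain ⟨f, hfS, hsum, hf⟩ := linearDepOn_iff.mp h
  obtain ⟨C, ⟨hCT, hinj⟩, hhom⟩ := exists_homogeneous_cycle_of_sum_smul_rho_eq_zero a hc
    (Finsupp.support_nonempty_iff.mpr hf) (fun e he => (hfS he).2)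
    (fun e he => Finsupp.mem_support_iff.mp he) hsum
  exact hA ⟨C, ⟨fun j => (hfS (hCT j)).1, hinj⟩, hhom⟩

theorem neg_mem_polyG {A : Finset (V × V)} (hsym : ∀ i j, (i, j) ∈ A → (j, i) ∈ A)
    {x : V → ℝ} (hx : x ∈ polyG A) : -x ∈ polyG A := by
  have hneg : -(rho '' (A : Set (V × V))) ⊆ rho '' A := by
    rintro _ ⟨e, he, hρ⟩
    exact ⟨e.swap, hsym _ _ he, by rw [← neg_rho, hρ, neg_neg]⟩
  have := convexHull_mono (𝕜 := ℝ) hneg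
  rw [convexHull_neg] at this
  exact this (Set.neg_mem_neg.mpr hx)

theorem exposing_value_ne_zero {A : Finset (V × V)} (hsym : ∀ i j, (i, j) ∈ A → (j, i) ∈ A)
    {F : Set (V → ℝ)} (hF : IsFacetOf F (polyG A)) (l : StrongDual ℝ (V → ℝ))
    (hFl : F = {x ∈ polyG A | ∀ y ∈ polyG A, l y ≤ l x}) {x : V → ℝ} (hx : x ∈ F) :
    l x ≠ 0 := by
  intro h0
  rw [hFl] at hx
  -- `polyG A = -polyG A`, so a linear form with maximum `0` on it vanishes on it
  have hFP : F = polyG A := by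
    rw [hFl]
    refine Set.sep_eq_self_iff_mem_true.mpr fun y hy z hz => ?_
    have := hx.2 _ (neg_mem_polyG hsym hy)
    rw [map_neg] at this
    linarith [hx.2 z hz]
  have := hF.2.2
  rw [hFP] at this
  omega

theorem simplicial_polyG [Finite V] (A : Finset (V × V))
    (hsym : ∀ i j, (i, j) ∈ A → (j, i) ∈ A)
    (hA : ¬∃ C : PreCycle V, C.IsCycleIn A ∧ C.Homogeneous) : Simplicial (polyG A) := by
  intro F hF
  obtain ⟨x₀, hx₀⟩ := hF.2.1
  obtain ⟨l, hFl⟩ := hF.1 ⟨x₀, hx₀⟩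
  set a : V → ℝ := fun i => l (Pi.single i 1)
  have hext : F.extremePoints ℝ ⊆ rho '' {e | e ∈ A ∧ a e.1 - a e.2 = l x₀} := by
    intro x hx
    obtain ⟨e, he, rfl⟩ := extremePoints_convexHull_subset
      (hF.1.isExtreme.extremePoints_subset_extremePoints hx)
    refine ⟨e, ⟨he, ?_⟩, rfl⟩
    have hmax := hFl ▸ hx.1
    have hmax₀ := hFl ▸ hx₀
    rw [← map_sub, ← rho_eq_single_sub_single]
    exact le_antisymm (hmax₀.2 _ hmax.1) (hmax.2 _ hmax₀.1)
  have hindep := (linearIndepOn_rho_of_level A hA a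
    (exposing_value_ne_zero hsym hF l hFl hx₀)).id_image.mono hext
  exact hindep.linearIndependent.affineIndependent

end Simplicial

theorem stmt13_general {d : ℕ} (A : Finset (Fin d × Fin d))
    (hsym : ∀ i j : Fin d, (i, j) ∈ A → (j, i) ∈ A)
    (hb : ∀ H : (SimpleGraph.fromRel fun i j : Fin d => (i, j) ∈ A).Subgraph,
      IsBlock _ H → IsSingleEdge _ H ∨ IsOddCycleSub _ H) :
    (¬ ∃ C : PreCycle (Fin d), C.IsCycleIn A ∧ C.Homogeneous) ∧
      Simplicial (polyG A) := by
  have hA := no_homogeneous_cycle A hb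
  exact ⟨hA, simplicial_polyG A hsym hA⟩

/-- if `G` is a connected symmetric directed graph each of whose
two-connected components (of the underlying undirected graph) is a single edge or an
odd cycle, then `G` has no homogeneous cycle and `P_G` is simplicial. -/
theorem stmt13 {d : ℕ} (A : Finset (Fin d × Fin d)) (hconn : GConnected A)
    (hsym : ∀ i j : Fin d, (i, j) ∈ A → (j, i) ∈ A)
    (hb : ∀ H : (SimpleGraph.fromRel fun i j : Fin d => (i, j) ∈ A).Subgraph,
      IsBlock _ H → IsSingleEdge _ H ∨ IsOddCycleSub _ H) :
    (¬ ∃ C : PreCycle (Fin d), C.IsCycleIn A ∧ C.Homogeneous) ∧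
      Simplicial (polyG A) :=
  stmt13_general A hsym hb
end
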